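/- arXiv:1708.08671 — 2 statements merged into one kernel-verified Lean document; each statement's English description precedes it below -/
import Mathlib

section
/- For every c > 0, I_S := ((u+cv)/(c²D²)) ∫₀^{X−1} ((x − Mc(1+x))³/(1+x)³) φ_{cM(1+x), c²D²(1+x)/(u+cv)}(x) dx = −(3c²D²/(u+cv))·[Φ(A(x)) + exp(2λ(1−cM))·Φ(B(x))]|₁^X + 2(1−cM)·(3 − 4λ(1−cM))·exp(2λ(1−cM))·[Φ(B(x))]|₁^X − [(√2·cD/(√π·√(u+cv)·x^{3/2}))·(3(1 − λ(1−cM))x + λ)·exp(−(u+cv)(x(1−cM)−1)²/(2x c²D²))]|₁^X, where [g(x)]|₁^X denotes g(X) − g(1). -/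
open MeasureTheory Real

/-- Standard normal cumulative distribution function. -/
noncomputable def stdNormalCDF (x : ℝ) : ℝ :=
  ∫ t in Set.Iic x, (Real.sqrt (2 * Real.pi))⁻¹ * Real.exp (-t ^ 2 / 2)

/-- P.d.f. of the normal distribution with mean `m` and variance `s2`. -/
noncomputable def normalPdf (m s2 x : ℝ) : ℝ :=
  (Real.sqrt (2 * Real.pi * s2))⁻¹ * Real.exp (-(x - m) ^ 2 / (2 * s2))

/-- `A(x) = (√(u+cv)/(cD√x))·(x(1−cM) − 1)`. -/
noncomputable def Afun (u c v M D x : ℝ) : ℝ :=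
  Real.sqrt (u + c * v) / (c * D * Real.sqrt x) * (x * (1 - c * M) - 1)

/-- `B(x) = −(√(u+cv)/(cD√x))·(1 + x(1−cM))`. -/
noncomputable def Bfun (u c v M D x : ℝ) : ℝ :=
  -(Real.sqrt (u + c * v) / (c * D * Real.sqrt x)) * (1 + x * (1 - c * M))

/-- The boundary term
`(√2·cD/(√π·√(u+cv)·x^{3/2}))·(3(1 − λ(1−cM))x + λ)·exp(−(u+cv)(x(1−cM)−1)²/(2x c²D²))`,
where `λ = (u+cv)/(c²D²)`. -/
noncomputable def Hfun (u c v M D x : ℝ) : ℝ :=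
  Real.sqrt 2 * c * D / (Real.sqrt Real.pi * Real.sqrt (u + c * v) * x ^ ((3:ℝ)/2)) *
    (3 * (1 - ((u + c * v) / (c ^ 2 * D ^ 2)) * (1 - c * M)) * x
        + (u + c * v) / (c ^ 2 * D ^ 2)) *
    Real.exp (-((u + c * v) * (x * (1 - c * M) - 1) ^ 2) / (2 * x * (c ^ 2 * D ^ 2)))

/-!
With `r = √(u+cv)/(cD)` and `p = 1 - cM` (so that `λ = r²`), the substitution `w = 1 + x` turns
`λ` times the integrand into `r² (pw - 1)³ / w³` times a normal density evaluated at `w - 1`, and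
the right-hand side into `G(X) - G(1)` for an explicit `G = primitive r p` built from `Φ(A)`,
`Φ(B)` and the boundary term. The theorem is then the fundamental theorem of calculus. The
derivative of `G` collapses because `exp(-A²/2) = exp(2r²p) exp(-B²/2)`, so every term of `G'`
carries the same Gaussian factor `exp(-r²(pw - 1)²/(2w))`.
-/

lemma hasDerivAt_stdNormalCDF (y : ℝ) :
    HasDerivAt stdNormalCDF ((√(2 * π))⁻¹ * exp (-y ^ 2 / 2)) y := by
  set φ : ℝ → ℝ := fun t => (√(2 * π))⁻¹ * exp (-t ^ 2 / 2)
  have hφ : Integrable φ := by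
    simpa [φ, div_eq_inv_mul, mul_comm] using
      (integrable_exp_neg_mul_sq (show (0:ℝ) < 1 / 2 by norm_num)).const_mul (√(2 * π))⁻¹
  have hsplit : stdNormalCDF = fun z => stdNormalCDF 0 + ∫ t in (0:ℝ)..z, φ t := by
    funext z
    rw [intervalIntegral.integral_Iic_sub_Iic hφ.integrableOn hφ.integrableOn |>.symm]
    unfold stdNormalCDF
    ring
  rw [hsplit]
  exact (intervalIntegral.integral_hasDerivAt_right hφ.intervalIntegrable
    hφ.1.stronglyMeasurableAtFilter (by fun_prop)).const_add _

lemma hasDerivAt_affine_div_sqrt (α β : ℝ) {x : ℝ} (hx : 0 < x) :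
    HasDerivAt (fun y => (α * y + β) / √y) ((α * x - β) / (2 * x * √x)) x := by
  have hs : 0 < √x := sqrt_pos.2 hx
  have h : HasDerivAt (fun y => (α * y + β) / √y) _ x :=
    ((hasDerivAt_id x).const_mul α |>.add_const β).div (hasDerivAt_sqrt hx.ne') hs.ne'
  refine h.congr_deriv ?_
  field_simp
  simp only [id]
  rw [sq_sqrt hx.le]
  ring

noncomputable def argA (r p x : ℝ) : ℝ := r * (p * x - 1) / √x

noncomputable def argB (r p x : ℝ) : ℝ := -(r * (p * x + 1) / √x)

noncomputable def gaussKernel (r p x : ℝ) : ℝ := exp (-(r ^ 2 * (p * x - 1) ^ 2 / (2 * x)))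

section

variable (r p : ℝ) {x : ℝ}

lemma hasDerivAt_argA (hx : 0 < x) :
    HasDerivAt (argA r p) (r * (p * x + 1) / (2 * x * √x)) x := by
  have h : argA r p = fun y => (r * p * y + -r) / √y := by
    funext y; unfold argA; ring
  rw [h]
  exact (hasDerivAt_affine_div_sqrt _ _ hx).congr_deriv (by ring)

lemma hasDerivAt_argB (hx : 0 < x) :
    HasDerivAt (argB r p) (r * (1 - p * x) / (2 * x * √x)) x := by
  have h : argB r p = fun y => (-(r * p) * y + -r) / √y := by
    funext y; unfold argB; ring
  rw [h]
  exact (hasDerivAt_affine_div_sqrt _ _ hx).congr_deriv (by ring)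

lemma exp_neg_sq_argA (hx : 0 ≤ x) : exp (-argA r p x ^ 2 / 2) = gaussKernel r p x := by
  unfold argA gaussKernel
  rw [div_pow, mul_pow, sq_sqrt hx]
  ring_nf

lemma exp_mul_exp_neg_sq_argB (hx : 0 < x) :
    exp (2 * r ^ 2 * p) * exp (-argB r p x ^ 2 / 2) = gaussKernel r p x := by
  unfold argB gaussKernel
  rw [← exp_add, neg_sq, div_pow, mul_pow, sq_sqrt hx.le]
  congr 1
  field_simp
  ring

lemma hasDerivAt_gaussKernel (hx : x ≠ 0) :
    HasDerivAt (gaussKernel r p)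
      (-(r ^ 2 * (p ^ 2 * x ^ 2 - 1) / (2 * x ^ 2)) * gaussKernel r p x) x := by
  have h : HasDerivAt (fun y => -(r ^ 2 * (p * y - 1) ^ 2 / (2 * y))) _ x :=
    ((((hasDerivAt_id x).const_mul p |>.sub_const 1).pow 2 |>.const_mul (r ^ 2)).div
      ((hasDerivAt_id x).const_mul 2) (mul_ne_zero two_ne_zero hx)).neg
  refine h.exp.congr_deriv ?_
  unfold gaussKernel
  simp only [id, Pi.pow_apply]
  field_simp
  ring

lemma hasDerivAt_stdNormalCDF_argA (hx : 0 < x) :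
    HasDerivAt (fun y => stdNormalCDF (argA r p y))
      ((√(2 * π))⁻¹ * gaussKernel r p x * (r * (p * x + 1) / (2 * x * √x))) x := by
  rw [← exp_neg_sq_argA r p hx.le]
  exact (hasDerivAt_stdNormalCDF _).comp x (hasDerivAt_argA r p hx)

lemma hasDerivAt_exp_mul_stdNormalCDF_argB (hx : 0 < x) :
    HasDerivAt (fun y => exp (2 * r ^ 2 * p) * stdNormalCDF (argB r p y))
      ((√(2 * π))⁻¹ * gaussKernel r p x * (r * (1 - p * x) / (2 * x * √x))) x := by
  rw [← exp_mul_exp_neg_sq_argB r p hx]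
  exact ((hasDerivAt_stdNormalCDF _).comp x (hasDerivAt_argB r p hx)).const_mul _
    |>.congr_deriv (by ring)

end

noncomputable def boundaryTerm (r p x : ℝ) : ℝ :=
  2 / (r * √(2 * π)) * ((3 * (1 - r ^ 2 * p) * x + r ^ 2) / (x * √x)) * gaussKernel r p x

noncomputable def integrand (r p x : ℝ) : ℝ :=
  r ^ 2 * ((p * x - 1) ^ 3 / x ^ 3 * normalPdf ((1 - p) * x) (x / r ^ 2) (x - 1))

noncomputable def primitive (r p x : ℝ) : ℝ :=
  -(3 / r ^ 2) * (stdNormalCDF (argA r p x) + exp (2 * r ^ 2 * p) * stdNormalCDF (argB r p x))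
    + 2 * p * (3 - 4 * r ^ 2 * p) * (exp (2 * r ^ 2 * p) * stdNormalCDF (argB r p x))
    - boundaryTerm r p x

section

variable (r p : ℝ) {x : ℝ}

lemma hasDerivAt_boundaryTerm (hx : 0 < x) :
    HasDerivAt (boundaryTerm r p)
      (-(3 * (1 - r ^ 2 * p) * x ^ 2 + 3 * r ^ 2 * x
          + r ^ 2 * (p ^ 2 * x ^ 2 - 1) * (3 * (1 - r ^ 2 * p) * x + r ^ 2))
        / (r * √(2 * π) * x ^ 3 * √x) * gaussKernel r p x) x := by
  have hs : 0 < √x := sqrt_pos.2 hx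
  have h : HasDerivAt (boundaryTerm r p) _ x :=
    ((((hasDerivAt_id x).const_mul (3 * (1 - r ^ 2 * p))).add_const (r ^ 2)).div
      ((hasDerivAt_id x).mul (hasDerivAt_sqrt hx.ne')) (mul_pos hx hs).ne').const_mul
      (2 / (r * √(2 * π))) |>.mul (hasDerivAt_gaussKernel r p hx.ne')
  refine h.congr_deriv ?_
  simp only [id, Pi.mul_apply, Pi.div_apply]
  field_simp
  rw [sq_sqrt hx.le]
  ring

lemma normalPdf_eq_gaussKernel (hr : 0 < r) (hx : 0 < x) :
    normalPdf ((1 - p) * x) (x / r ^ 2) (x - 1) = r / √(2 * π * x) * gaussKernel r p x := by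
  have hvar : √(2 * π * (x / r ^ 2)) = √(2 * π * x) / r := by
    rw [mul_div_assoc', sqrt_div' _ (sq_nonneg r), sqrt_sq hr.le]
  unfold normalPdf gaussKernel
  rw [hvar, inv_div]
  congr 2
  field_simp
  ring

lemma hasDerivAt_primitive (hr : 0 < r) (hx : 0 < x) :
    HasDerivAt (primitive r p) (integrand r p x) x := by
  have h := (((hasDerivAt_stdNormalCDF_argA r p hx).add
      (hasDerivAt_exp_mul_stdNormalCDF_argB r p hx)).const_mul (-(3 / r ^ 2))).add
    ((hasDerivAt_exp_mul_stdNormalCDF_argB r p hx).const_mul (2 * p * (3 - 4 * r ^ 2 * p)))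
    |>.sub (hasDerivAt_boundaryTerm r p hx)
  refine h.congr_deriv ?_
  rw [integrand, normalPdf_eq_gaussKernel r p hr hx, sqrt_mul (by positivity : (0:ℝ) ≤ 2 * π) x]
  field_simp
  ring

lemma continuousOn_integrand (hr : 0 < r) : ContinuousOn (integrand r p) (Set.Ioi 0) := by
  intro x (hx : 0 < x)
  unfold integrand normalPdf
  exact ContinuousAt.continuousWithinAt (by fun_prop (disch := positivity))

lemma integral_integrand (hr : 0 < r) {a b : ℝ} (ha : 0 < a) (hab : a ≤ b) :
    ∫ x in a..b, integrand r p x = primitive r p b - primitive r p a := by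
  have hpos : ∀ x ∈ Set.uIcc a b, 0 < x := fun x hx =>
    ha.trans_le (Set.uIcc_of_le hab ▸ hx).1
  exact intervalIntegral.integral_eq_sub_of_hasDerivAt
    (fun x hx => hasDerivAt_primitive r p hr (hpos x hx))
    ((continuousOn_integrand r p hr).mono hpos).intervalIntegrable

end

section

variable {u c v M D : ℝ}

lemma sq_sqrt_div_mul (ha : 0 ≤ u + c * v) :
    (√(u + c * v) / (c * D)) ^ 2 = (u + c * v) / (c ^ 2 * D ^ 2) := by
  rw [div_pow, sq_sqrt ha, mul_pow]

lemma boundaryTerm_eq_Hfun (ha : 0 < u + c * v) {x : ℝ} (hx : 0 < x) :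
    boundaryTerm (√(u + c * v) / (c * D)) (1 - c * M) x = Hfun u c v M D x := by
  have h32 : x ^ ((3 : ℝ) / 2) = x * √x := by
    rw [show (3 : ℝ) / 2 = 1 + 1 / 2 by norm_num, rpow_add hx, rpow_one, ← sqrt_eq_rpow]
  unfold boundaryTerm gaussKernel Hfun
  rw [sq_sqrt_div_mul ha.le, h32, sqrt_mul zero_le_two π]
  field_simp
  rw [sq_sqrt zero_le_two]
  ring

lemma primitive_eq (ha : 0 < u + c * v) {x : ℝ} (hx : 0 < x) :
    primitive (√(u + c * v) / (c * D)) (1 - c * M) x =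
      -(3 * (c ^ 2 * D ^ 2) / (u + c * v)) *
          (stdNormalCDF (Afun u c v M D x)
            + exp (2 * ((u + c * v) / (c ^ 2 * D ^ 2)) * (1 - c * M))
                * stdNormalCDF (Bfun u c v M D x))
        + 2 * (1 - c * M) * (3 - 4 * ((u + c * v) / (c ^ 2 * D ^ 2)) * (1 - c * M)) *
            exp (2 * ((u + c * v) / (c ^ 2 * D ^ 2)) * (1 - c * M)) *
            stdNormalCDF (Bfun u c v M D x)
        - Hfun u c v M D x := by
  have hA : argA (√(u + c * v) / (c * D)) (1 - c * M) x = Afun u c v M D x := by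
    unfold argA Afun; ring
  have hB : argB (√(u + c * v) / (c * D)) (1 - c * M) x = Bfun u c v M D x := by
    unfold argB Bfun; ring
  unfold primitive
  rw [hA, hB, boundaryTerm_eq_Hfun ha hx, sq_sqrt_div_mul ha.le]
  field_simp

end

theorem IS_eq_general (u c v t M D : ℝ)
    (hu : 0 < u) (hc : 0 < c) (hv : 0 ≤ v) (ht : v < t) (hD : 0 < D) :
    ((u + c * v) / (c ^ 2 * D ^ 2)) *
        ∫ x in (0:ℝ)..(c * (t - v) / (u + c * v)),
          (x - M * c * (1 + x)) ^ 3 / (1 + x) ^ 3 *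
            normalPdf (c * M * (1 + x)) (c ^ 2 * D ^ 2 * (1 + x) / (u + c * v)) x
      = -(3 * (c ^ 2 * D ^ 2) / (u + c * v)) *
          ((stdNormalCDF (Afun u c v M D (c * (t - v) / (u + c * v) + 1))
              + Real.exp (2 * ((u + c * v) / (c ^ 2 * D ^ 2)) * (1 - c * M))
                  * stdNormalCDF (Bfun u c v M D (c * (t - v) / (u + c * v) + 1)))
            - (stdNormalCDF (Afun u c v M D 1)
              + Real.exp (2 * ((u + c * v) / (c ^ 2 * D ^ 2)) * (1 - c * M))
                  * stdNormalCDF (Bfun u c v M D 1)))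
        + 2 * (1 - c * M) *
            (3 - 4 * ((u + c * v) / (c ^ 2 * D ^ 2)) * (1 - c * M)) *
            Real.exp (2 * ((u + c * v) / (c ^ 2 * D ^ 2)) * (1 - c * M)) *
            (stdNormalCDF (Bfun u c v M D (c * (t - v) / (u + c * v) + 1))
              - stdNormalCDF (Bfun u c v M D 1))
        - (Hfun u c v M D (c * (t - v) / (u + c * v) + 1) - Hfun u c v M D 1) := by
  have ha : 0 < u + c * v := by positivity
  have hcD : 0 < c * D := mul_pos hc hD
  set s := c * (t - v) / (u + c * v)
  have hs : 0 < s := div_pos (mul_pos hc (sub_pos.2 ht)) ha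
  set r := √(u + c * v) / (c * D)
  have hr : 0 < r := div_pos (sqrt_pos.2 ha) hcD
  have hlam : (u + c * v) / (c ^ 2 * D ^ 2) = r ^ 2 := (sq_sqrt_div_mul ha.le).symm
  have hshift : (u + c * v) / (c ^ 2 * D ^ 2) *
      ∫ x in (0:ℝ)..s, (x - M * c * (1 + x)) ^ 3 / (1 + x) ^ 3 *
        normalPdf (c * M * (1 + x)) (c ^ 2 * D ^ 2 * (1 + x) / (u + c * v)) x
      = ∫ x in (1:ℝ)..s + 1, integrand r (1 - c * M) x := by
    have h := intervalIntegral.integral_comp_add_right (integrand r (1 - c * M)) 1 (a := 0) (b := s)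
    rw [zero_add] at h
    rw [← h, ← intervalIntegral.integral_const_mul]
    refine intervalIntegral.integral_congr fun x _ => ?_
    rw [integrand, hlam, show c ^ 2 * D ^ 2 * (1 + x) / (u + c * v) = (x + 1) / r ^ 2 by
      rw [← hlam]; field_simp; ring]
    ring_nf
  rw [hshift, integral_integrand r _ hr one_pos (by linarith), primitive_eq ha (by linarith),
    primitive_eq ha one_pos]
  ring

/-- Explicit expression for `I_S` for every `c > 0`. -/
theorem IS_eq (u c v t M D : ℝ)
    (hu : 0 < u) (hc : 0 < c) (hv : 0 ≤ v) (ht : v < t) (hM : 0 < M) (hD : 0 < D) :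
    ((u + c * v) / (c ^ 2 * D ^ 2)) *
        ∫ x in (0:ℝ)..(c * (t - v) / (u + c * v)),
          (x - M * c * (1 + x)) ^ 3 / (1 + x) ^ 3 *
            normalPdf (c * M * (1 + x)) (c ^ 2 * D ^ 2 * (1 + x) / (u + c * v)) x
      = -(3 * (c ^ 2 * D ^ 2) / (u + c * v)) *
          ((stdNormalCDF (Afun u c v M D (c * (t - v) / (u + c * v) + 1))
              + Real.exp (2 * ((u + c * v) / (c ^ 2 * D ^ 2)) * (1 - c * M))
                  * stdNormalCDF (Bfun u c v M D (c * (t - v) / (u + c * v) + 1)))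
            - (stdNormalCDF (Afun u c v M D 1)
              + Real.exp (2 * ((u + c * v) / (c ^ 2 * D ^ 2)) * (1 - c * M))
                  * stdNormalCDF (Bfun u c v M D 1)))
        + 2 * (1 - c * M) *
            (3 - 4 * ((u + c * v) / (c ^ 2 * D ^ 2)) * (1 - c * M)) *
            Real.exp (2 * ((u + c * v) / (c ^ 2 * D ^ 2)) * (1 - c * M)) *
            (stdNormalCDF (Bfun u c v M D (c * (t - v) / (u + c * v) + 1))
              - stdNormalCDF (Bfun u c v M D 1))
        - (Hfun u c v M D (c * (t - v) / (u + c * v) + 1) - Hfun u c v M D 1) :=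
  IS_eq_general u c v t M D hu hc hv ht hD
end

section
/- At the critical point c = c* = 1/M one has I_M^t(u,c*,v) = 2·[Φ(√(u+c*v)/(c*D)) − Φ(√(u+c*v)/(c*D·√X))] with X = c*(t−v)/(u+c*v) + 1, and I_M^∞(u,c*,v) = 2·Φ(√(u+c*v)/(c*D)) − 1. Moreover, for v = 0, lim_{c→0⁺} I_M^t(u,c,0) = Φ((t − Mu)/(D√u)) − Φ(−(M/D)√u) and lim_{c→0⁺} I_M^∞(u,c,0) = Φ((M/D)√u). -/
open MeasureTheory Real Filter

/-- `I_M^t(u,c,v)`. -/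
noncomputable def IMt (u c v t M D : ℝ) : ℝ :=
  ∫ x in (0:ℝ)..(c * (t - v) / (u + c * v)),
    (1 + x)⁻¹ * normalPdf (c * M * (1 + x)) (c ^ 2 * D ^ 2 * (1 + x) / (u + c * v)) x

/-- `I_M^∞(u,c,v)`. -/
noncomputable def IMinf (u c v M D : ℝ) : ℝ :=
  ∫ x in Set.Ioi (0:ℝ),
    (1 + x)⁻¹ * normalPdf (c * M * (1 + x)) (c ^ 2 * D ^ 2 * (1 + x) / (u + c * v)) x

/-!
At `c = 1 / M` the mean `c M (1 + x)` equals `1 + x`, and the integrand becomes the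
derivative of `x ↦ -2 Φ(a / √(1 + x))` with `a = √(u + c v) / (c D)`; both closed forms then
follow from the fundamental theorem of calculus, using `Φ(0) = 1/2` at infinity.

For `v = 0` the substitution `x = c s / u` turns the integrand into
`(1 + c s / u)⁻¹ φ_{M (u + c s), D² (u + c s)}(s)`, which tends to the density of
`N(M u, D² u)` as `c → 0⁺`. Dominated convergence, with a constant bound on `[0, t]` and an
exponentially decaying bound on `(0, ∞)` (valid once `c ≤ 1` and `c M ≤ 1/2`), gives the two
limits.
-/

open Set Topology ProbabilityTheory

lemma normalPdf_eq_gaussianPDFReal (m s2 : ℝ) :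
    normalPdf m s2 = gaussianPDFReal m s2.toNNReal := by
  ext x
  rcases le_or_gt 0 s2 with h | h
  · simp [normalPdf, gaussianPDFReal, Real.coe_toNNReal _ h]
  · have : 2 * π * s2 ≤ 0 := by nlinarith [pi_pos]
    simp [normalPdf, Real.toNNReal_of_nonpos h.le, Real.sqrt_eq_zero_of_nonpos this]

lemma normalPdf_nonneg (m s2 x : ℝ) : 0 ≤ normalPdf m s2 x := by
  unfold normalPdf; positivity

lemma integrable_normalPdf (m s2 : ℝ) : Integrable (normalPdf m s2) := by
  rw [normalPdf_eq_gaussianPDFReal]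
  exact integrable_gaussianPDFReal _ _

lemma integral_normalPdf_eq_one (m : ℝ) {s2 : ℝ} (h : 0 < s2) :
    ∫ x, normalPdf m s2 x = 1 := by
  rw [normalPdf_eq_gaussianPDFReal]
  exact integral_gaussianPDFReal_eq_one _ (by simpa using h)

lemma continuous_normalPdf (m s2 : ℝ) : Continuous (normalPdf m s2) := by
  unfold normalPdf; fun_prop

lemma normalPdf_zero_neg (s2 x : ℝ) : normalPdf 0 s2 (-x) = normalPdf 0 s2 x := by
  simp [normalPdf]

lemma normalPdf_mul {l : ℝ} (hl : l ≠ 0) (m s2 x : ℝ) :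
    normalPdf (l * m) (l ^ 2 * s2) (l * x) = |l|⁻¹ * normalPdf m s2 x := by
  have hsqrt : √(2 * π * (l ^ 2 * s2)) = |l| * √(2 * π * s2) := by
    rw [show 2 * π * (l ^ 2 * s2) = l ^ 2 * (2 * π * s2) by ring,
      Real.sqrt_mul (sq_nonneg l), Real.sqrt_sq_eq_abs]
  have hexp : -(l * x - l * m) ^ 2 / (2 * (l ^ 2 * s2)) = -(x - m) ^ 2 / (2 * s2) := by
    rcases eq_or_ne s2 0 with rfl | hs2
    · simp
    · field_simp
  rw [normalPdf, normalPdf, hsqrt, hexp, mul_inv, mul_assoc]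

lemma stdNormalCDF_eq_integral (x : ℝ) : stdNormalCDF x = ∫ t in Iic x, normalPdf 0 1 t := by
  simp [stdNormalCDF, normalPdf]

lemma stdNormalCDF_sub_stdNormalCDF (a b : ℝ) :
    stdNormalCDF b - stdNormalCDF a = ∫ x in a..b, normalPdf 0 1 x := by
  rw [stdNormalCDF_eq_integral, stdNormalCDF_eq_integral]
  exact intervalIntegral.integral_Iic_sub_Iic (integrable_normalPdf 0 1).integrableOn
    (integrable_normalPdf 0 1).integrableOn

lemma stdNormalCDF_eq_add_integral (x : ℝ) :
    stdNormalCDF x = stdNormalCDF 0 + ∫ t in (0 : ℝ)..x, normalPdf 0 1 t := by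
  rw [← stdNormalCDF_sub_stdNormalCDF]; ring

lemma hasDerivAt_stdNormalCDF_s11 (x : ℝ) : HasDerivAt stdNormalCDF (normalPdf 0 1 x) x := by
  rw [show stdNormalCDF = _ from funext stdNormalCDF_eq_add_integral]
  exact (intervalIntegral.integral_hasDerivAt_right (integrable_normalPdf 0 1).intervalIntegrable
    ((continuous_normalPdf 0 1).stronglyMeasurableAtFilter _ _)
    (continuous_normalPdf 0 1).continuousAt).const_add _

lemma continuous_stdNormalCDF : Continuous stdNormalCDF :=
  continuous_iff_continuousAt.2 fun x => (hasDerivAt_stdNormalCDF_s11 x).continuousAt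

lemma stdNormalCDF_add_integral_Ioi (x : ℝ) :
    stdNormalCDF x + ∫ t in Ioi x, normalPdf 0 1 t = 1 := by
  rw [stdNormalCDF_eq_integral, intervalIntegral.integral_Iic_add_Ioi
    (integrable_normalPdf 0 1).integrableOn (integrable_normalPdf 0 1).integrableOn,
    integral_normalPdf_eq_one 0 one_pos]

lemma stdNormalCDF_neg (x : ℝ) : stdNormalCDF (-x) = 1 - stdNormalCDF x := by
  have h : stdNormalCDF (-x) = ∫ t in Ioi x, normalPdf 0 1 t := by
    rw [stdNormalCDF_eq_integral, ← integral_comp_neg_Ioi]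
    simp only [normalPdf_zero_neg]
  linarith [stdNormalCDF_add_integral_Ioi x]

lemma stdNormalCDF_zero : stdNormalCDF 0 = 1 / 2 := by
  have h := stdNormalCDF_neg 0
  rw [neg_zero] at h
  linarith

lemma tendsto_stdNormalCDF_atTop : Tendsto stdNormalCDF atTop (𝓝 1) := by
  have h := (intervalIntegral_tendsto_integral_Ioi 0 (integrable_normalPdf 0 1).integrableOn
    tendsto_id).const_add (stdNormalCDF 0)
  rw [stdNormalCDF_add_integral_Ioi] at h
  simpa only [id, ← stdNormalCDF_eq_add_integral] using h

lemma normalPdf_eq_normalPdf_zero (m s2 x : ℝ) : normalPdf m s2 x = normalPdf 0 s2 (x - m) := by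
  simp [normalPdf]

lemma hasDerivAt_stdNormalCDF_sub_div (m : ℝ) {σ : ℝ} (hσ : 0 < σ) (s : ℝ) :
    HasDerivAt (fun s => stdNormalCDF ((s - m) / σ)) (normalPdf m (σ ^ 2) s) s := by
  have h := (hasDerivAt_stdNormalCDF_s11 ((s - m) / σ)).comp s
    (((hasDerivAt_id s).sub_const m).div_const σ)
  have hpdf := normalPdf_mul hσ.ne' 0 1 ((s - m) / σ)
  rw [mul_zero, mul_one, mul_div_cancel₀ _ hσ.ne', abs_of_pos hσ,
    ← normalPdf_eq_normalPdf_zero] at hpdf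
  rw [hpdf]
  exact h.congr_deriv (by simp [mul_comm])

lemma integral_normalPdf_sq (m : ℝ) {σ : ℝ} (hσ : 0 < σ) (a b : ℝ) :
    ∫ s in a..b, normalPdf m (σ ^ 2) s
      = stdNormalCDF ((b - m) / σ) - stdNormalCDF ((a - m) / σ) :=
  intervalIntegral.integral_eq_sub_of_hasDerivAt
    (fun s _ => hasDerivAt_stdNormalCDF_sub_div m hσ s)
    ((continuous_normalPdf _ _).intervalIntegrable _ _)

lemma integral_Ioi_normalPdf_sq (m : ℝ) {σ : ℝ} (hσ : 0 < σ) (a : ℝ) :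
    ∫ s in Ioi a, normalPdf m (σ ^ 2) s = stdNormalCDF ((m - a) / σ) := by
  have htop : Tendsto (fun s => stdNormalCDF ((s - m) / σ)) atTop (𝓝 1) :=
    tendsto_stdNormalCDF_atTop.comp
      ((tendsto_atTop_add_const_right _ _ tendsto_id).atTop_div_const hσ)
  rw [integral_Ioi_of_hasDerivAt_of_nonneg' (fun s _ => hasDerivAt_stdNormalCDF_sub_div m hσ s)
    (fun s _ => normalPdf_nonneg _ _ _) htop, ← stdNormalCDF_neg, ← neg_div, neg_sub]

noncomputable def criticalIntegrand (a x : ℝ) : ℝ :=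
  (1 + x)⁻¹ * normalPdf (1 + x) ((1 + x) / a ^ 2) x

lemma integrand_eq_criticalIntegrand {u c v M D : ℝ} (hcM : c * M = 1) (huv : 0 ≤ u + c * v)
    (x : ℝ) :
    (1 + x)⁻¹ * normalPdf (c * M * (1 + x)) (c ^ 2 * D ^ 2 * (1 + x) / (u + c * v)) x
      = criticalIntegrand (√(u + c * v) / (c * D)) x := by
  rw [criticalIntegrand, hcM, one_mul, div_pow, Real.sq_sqrt huv, div_div_eq_mul_div, mul_pow,
    mul_comm (1 + x)]

lemma hasDerivAt_stdNormalCDF_div_sqrt {a x : ℝ} (ha : 0 < a) (hx : -1 < x) :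
    HasDerivAt (fun x => -2 * stdNormalCDF (a / √(1 + x))) (criticalIntegrand a x) x := by
  have hy : 0 < 1 + x := by linarith
  have hs : 0 < √(1 + x) := Real.sqrt_pos.2 hy
  have hsqrt : HasDerivAt (fun x => √(1 + x)) (1 / (2 * √(1 + x))) x := by
    simpa using ((hasDerivAt_id x).const_add 1).sqrt hy.ne'
  have h := ((hasDerivAt_stdNormalCDF_s11 _).comp x
    ((hasDerivAt_const x a).div hsqrt hs.ne')).const_mul (-2)
  simp only [Pi.div_def] at h
  refine h.congr_deriv ?_
  have hsd : √(2 * π * ((1 + x) / a ^ 2)) = √(2 * π) * √(1 + x) / a := by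
    rw [Real.sqrt_mul (by positivity), Real.sqrt_div hy.le, Real.sqrt_sq ha.le, mul_div_assoc]
  simp only [criticalIntegrand, normalPdf, hsd, div_pow, Real.sq_sqrt hy.le, sub_zero, mul_one]
  field_simp
  ring_nf

lemma criticalIntegrand_nonneg {x : ℝ} (hx : -1 < x) (a : ℝ) : 0 ≤ criticalIntegrand a x :=
  mul_nonneg (inv_nonneg.2 (by linarith)) (normalPdf_nonneg _ _ _)

lemma tendsto_stdNormalCDF_div_sqrt_atTop (a : ℝ) :
    Tendsto (fun x => -2 * stdNormalCDF (a / √(1 + x))) atTop (𝓝 (-1)) := by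
  have h : Tendsto (fun x => a / √(1 + x)) atTop (𝓝 0) :=
    tendsto_const_nhds.div_atTop
      (tendsto_sqrt_atTop.comp (tendsto_atTop_add_const_left _ _ tendsto_id))
  rw [show (-1 : ℝ) = -2 * stdNormalCDF 0 by rw [stdNormalCDF_zero]; norm_num]
  exact ((continuous_stdNormalCDF.tendsto 0).comp h).const_mul (-2)

lemma integral_criticalIntegrand {a X : ℝ} (ha : 0 < a) (hX : 0 ≤ X) :
    ∫ x in (0 : ℝ)..X, criticalIntegrand a x
      = 2 * (stdNormalCDF a - stdNormalCDF (a / √(1 + X))) := by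
  have hderiv : ∀ x ∈ Ici (0 : ℝ), HasDerivAt (fun x => -2 * stdNormalCDF (a / √(1 + x)))
      (criticalIntegrand a x) x :=
    fun x hx => hasDerivAt_stdNormalCDF_div_sqrt ha (by linarith [hx.out])
  have hint := integrableOn_Ioi_deriv_of_nonneg' hderiv
    (fun x hx => criticalIntegrand_nonneg (by linarith [hx.out]) a)
    (tendsto_stdNormalCDF_div_sqrt_atTop a)
  rw [intervalIntegral.integral_eq_sub_of_hasDerivAt
    (fun x hx => hderiv x (by rw [uIcc_of_le hX] at hx; exact hx.1))
    ((intervalIntegrable_iff_integrableOn_Ioc_of_le hX).2 (hint.mono_set Ioc_subset_Ioi_self))]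
  simp only [add_zero, Real.sqrt_one, div_one]
  ring

lemma integral_Ioi_criticalIntegrand {a : ℝ} (ha : 0 < a) :
    ∫ x in Ioi (0 : ℝ), criticalIntegrand a x = 2 * stdNormalCDF a - 1 := by
  rw [integral_Ioi_of_hasDerivAt_of_nonneg'
    (fun x hx => hasDerivAt_stdNormalCDF_div_sqrt ha (by linarith [hx.out]))
    (fun x hx => criticalIntegrand_nonneg (by linarith [hx.out]) a)
    (tendsto_stdNormalCDF_div_sqrt_atTop a)]
  simp only [add_zero, Real.sqrt_one, div_one]
  ring

noncomputable def rescaledIntegrand (u M D c s : ℝ) : ℝ :=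
  (1 + c / u * s)⁻¹ * normalPdf (M * (u + c * s)) (D ^ 2 * (u + c * s)) s

lemma mul_integrand_eq_rescaledIntegrand {u c : ℝ} (hu : 0 < u) (hc : 0 < c) (M D s : ℝ) :
    c / u * ((1 + c / u * s)⁻¹
        * normalPdf (c * M * (1 + c / u * s)) (c ^ 2 * D ^ 2 * (1 + c / u * s) / u) (c / u * s))
      = rescaledIntegrand u M D c s := by
  have hcu : 0 < c / u := div_pos hc hu
  have hmean : c * M * (1 + c / u * s) = c / u * (M * (u + c * s)) := by field_simp
  have hvar : c ^ 2 * D ^ 2 * (1 + c / u * s) / u = (c / u) ^ 2 * (D ^ 2 * (u + c * s)) := by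
    field_simp
  rw [hmean, hvar, normalPdf_mul hcu.ne', abs_of_pos hcu, rescaledIntegrand]
  field_simp

lemma IMt_zero_eq_integral_rescaledIntegrand {u c : ℝ} (hu : 0 < u) (hc : 0 < c) (t M D : ℝ) :
    IMt u c 0 t M D = ∫ s in (0 : ℝ)..t, rescaledIntegrand u M D c s := by
  let f x := (1 + x)⁻¹ * normalPdf (c * M * (1 + x)) (c ^ 2 * D ^ 2 * (1 + x) / u) x
  calc IMt u c 0 t M D = c / u * ∫ s in (0 : ℝ)..t, f (c / u * s) := by
        rw [intervalIntegral.mul_integral_comp_mul_left]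
        simp [IMt, f, mul_div_right_comm]
    _ = _ := by
        simp only [f, ← intervalIntegral.integral_const_mul,
          mul_integrand_eq_rescaledIntegrand hu hc]

lemma IMinf_zero_eq_integral_rescaledIntegrand {u c : ℝ} (hu : 0 < u) (hc : 0 < c) (M D : ℝ) :
    IMinf u c 0 M D = ∫ s in Ioi (0 : ℝ), rescaledIntegrand u M D c s := by
  let f x := (1 + x)⁻¹ * normalPdf (c * M * (1 + x)) (c ^ 2 * D ^ 2 * (1 + x) / u) x
  calc IMinf u c 0 M D = c / u * ∫ s in Ioi (0 : ℝ), f (c / u * s) := by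
        rw [← smul_eq_mul, integral_comp_mul_left_Ioi' f 0 (div_pos hc hu)]
        simp [IMinf, f]
    _ = _ := by
        simp only [f, ← integral_const_mul, mul_integrand_eq_rescaledIntegrand hu hc]

lemma rescaledIntegrand_zero {u : ℝ} (hu : 0 ≤ u) (M D s : ℝ) :
    rescaledIntegrand u M D 0 s = normalPdf (M * u) ((D * √u) ^ 2) s := by
  simp [rescaledIntegrand, mul_pow, Real.sq_sqrt hu]

lemma continuousAt_rescaledIntegrand {u D : ℝ} (hu : 0 < u) (hD : D ≠ 0) (M s : ℝ) :
    ContinuousAt (fun c => rescaledIntegrand u M D c s) 0 := by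
  unfold rescaledIntegrand normalPdf
  fun_prop (disch := simp only [zero_mul, zero_div, add_zero]; positivity)

lemma measurable_rescaledIntegrand (u M D c : ℝ) : Measurable (rescaledIntegrand u M D c) := by
  unfold rescaledIntegrand normalPdf
  fun_prop

lemma one_le_one_add_div_mul {u c s : ℝ} (hu : 0 < u) (hc : 0 ≤ c) (hs : 0 ≤ s) :
    1 ≤ 1 + c / u * s :=
  le_add_of_nonneg_right (by positivity)

lemma rescaledIntegrand_nonneg {u c s : ℝ} (hu : 0 < u) (hc : 0 ≤ c) (hs : 0 ≤ s)
    (M D : ℝ) :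
    0 ≤ rescaledIntegrand u M D c s :=
  mul_nonneg (inv_nonneg.2 (zero_le_one.trans (one_le_one_add_div_mul hu hc hs)))
    (normalPdf_nonneg _ _ _)

lemma rescaledIntegrand_le {u c s D : ℝ} (hu : 0 < u) (hc : 0 ≤ c) (hs : 0 ≤ s) (hD : D ≠ 0)
    (M : ℝ) : rescaledIntegrand u M D c s ≤ (√(2 * π * (D ^ 2 * u)))⁻¹ := by
  have h1 := one_le_one_add_div_mul hu hc hs
  unfold rescaledIntegrand normalPdf
  calc _ ≤ 1 * ((√(2 * π * (D ^ 2 * u)))⁻¹ * 1) := by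
        gcongr
        · exact inv_le_one_of_one_le₀ h1
        · nlinarith [mul_nonneg hc hs]
        · exact exp_le_one_iff.2 (div_nonpos_of_nonpos_of_nonneg (by nlinarith) (by positivity))
    _ = _ := by ring

lemma sub_mul_le_eight_mul_sq {u c s M : ℝ} (hu : 0 ≤ u) (hc0 : 0 ≤ c) (hc1 : c ≤ 1)
    (hcM : c * M ≤ 1 / 2) (hs : 0 ≤ s) :
    (s - (u + 8 * u * M ^ 2)) * (u + c * s) ≤ 8 * (s - M * (u + c * s)) ^ 2 := by
  rcases le_or_gt s (u + 8 * u * M ^ 2) with h | h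
  · exact (mul_nonpos_of_nonpos_of_nonneg (by linarith) (by positivity)).trans (by positivity)
  · have hlhs : (s - (u + 8 * u * M ^ 2)) * (u + c * s) ≤ s ^ 2 - 8 * u ^ 2 * M ^ 2 := by
      nlinarith [mul_le_mul_of_nonneg_left (mul_le_of_le_one_left hs hc1) (sub_nonneg.2 h.le),
        mul_nonneg (mul_nonneg hu hs) (sq_nonneg M)]
    have hsq : s ^ 2 ≤ 4 * ((1 - c * M) * s) ^ 2 := by
      nlinarith [mul_le_mul (by linarith : 1 / 2 ≤ 1 - c * M) (by linarith : 1 / 2 ≤ 1 - c * M)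
        (by norm_num) (by linarith), sq_nonneg s]
    nlinarith [sq_nonneg ((1 - c * M) * s - 2 * (u * M))]

lemma rescaledIntegrand_le_exp {u c s M D : ℝ} (hu : 0 < u) (hc0 : 0 ≤ c) (hc1 : c ≤ 1)
    (hcM : c * M ≤ 1 / 2) (hs : 0 ≤ s) (hD : D ≠ 0) :
    rescaledIntegrand u M D c s
      ≤ (√(2 * π * (D ^ 2 * u)))⁻¹ * exp ((u + 8 * u * M ^ 2 - s) / (16 * D ^ 2)) := by
  have h1 := one_le_one_add_div_mul hu hc0 hs
  have hexp : -(s - M * (u + c * s)) ^ 2 / (2 * (D ^ 2 * (u + c * s)))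
      ≤ (u + 8 * u * M ^ 2 - s) / (16 * D ^ 2) := by
    rw [div_le_div_iff₀ (by positivity) (by positivity)]
    nlinarith [mul_le_mul_of_nonneg_left (sub_mul_le_eight_mul_sq hu.le hc0 hc1 hcM hs)
      (sq_nonneg D)]
  unfold rescaledIntegrand normalPdf
  calc _ ≤ 1 * ((√(2 * π * (D ^ 2 * u)))⁻¹
            * exp ((u + 8 * u * M ^ 2 - s) / (16 * D ^ 2))) := by
        gcongr
        · exact inv_le_one_of_one_le₀ h1
        · nlinarith [mul_nonneg hc0 hs]
    _ = _ := one_mul _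

lemma tendsto_IMt_zero {u t D : ℝ} (hu : 0 < u) (ht : 0 ≤ t) (hD : 0 < D) (M : ℝ) :
    Tendsto (fun c => IMt u c 0 t M D) (𝓝[>] 0)
      (𝓝 (stdNormalCDF ((t - M * u) / (D * √u)) - stdNormalCDF (-(M / D) * √u))) := by
  have hlim : Tendsto (fun c => ∫ s in (0 : ℝ)..t, rescaledIntegrand u M D c s) (𝓝[>] 0)
      (𝓝 (∫ s in (0 : ℝ)..t, rescaledIntegrand u M D 0 s)) := by
    refine intervalIntegral.tendsto_integral_filter_of_dominated_convergence
      (fun _ => (√(2 * π * (D ^ 2 * u)))⁻¹)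
      (.of_forall fun c => (measurable_rescaledIntegrand u M D c).aestronglyMeasurable) ?_
      intervalIntegrable_const
      (.of_forall fun s _ => (continuousAt_rescaledIntegrand hu hD.ne' M s).continuousWithinAt)
    filter_upwards [self_mem_nhdsWithin] with c (hc : 0 < c)
    refine .of_forall fun s hs => ?_
    rw [uIoc_of_le ht] at hs
    rw [Real.norm_of_nonneg (rescaledIntegrand_nonneg hu hc.le hs.1.le M D)]
    exact rescaledIntegrand_le hu hc.le hs.1.le hD.ne' M
  have hval : ∫ s in (0 : ℝ)..t, rescaledIntegrand u M D 0 s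
      = stdNormalCDF ((t - M * u) / (D * √u)) - stdNormalCDF (-(M / D) * √u) := by
    simp only [rescaledIntegrand_zero hu.le,
      integral_normalPdf_sq _ (by positivity : 0 < D * √u), zero_sub, neg_div,
      mul_div_mul_comm, div_sqrt, neg_mul]
  rw [← hval]
  exact hlim.congr' (eventually_nhdsWithin_of_forall fun c hc =>
    (IMt_zero_eq_integral_rescaledIntegrand hu hc t M D).symm)

lemma tendsto_IMinf_zero {u D : ℝ} (hu : 0 < u) (hD : 0 < D) (M : ℝ) :
    Tendsto (fun c => IMinf u c 0 M D) (𝓝[>] 0) (𝓝 (stdNormalCDF (M / D * √u))) := by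
  have hsmall : ∀ᶠ c in 𝓝[>] (0 : ℝ), 0 < c ∧ c ≤ 1 ∧ c * M ≤ 1 / 2 := by
    have hcM : ∀ᶠ c in 𝓝 (0 : ℝ), c * M < 1 / 2 :=
      ((continuous_mul_const M).tendsto' 0 0 (zero_mul M)).eventually_lt_const (by norm_num)
    filter_upwards [self_mem_nhdsWithin, nhdsWithin_le_nhds (eventually_le_nhds one_pos),
      nhdsWithin_le_nhds hcM] with c hc0 hc1 hcM using ⟨hc0, hc1, hcM.le⟩
  have hbound : IntegrableOn
      (fun s => (√(2 * π * (D ^ 2 * u)))⁻¹ * exp ((u + 8 * u * M ^ 2 - s) / (16 * D ^ 2)))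
      (Ioi 0) := by
    refine IntegrableOn.congr_fun ((exp_neg_integrableOn_Ioi 0
      (by positivity : 0 < 1 / (16 * D ^ 2))).const_mul
      ((√(2 * π * (D ^ 2 * u)))⁻¹ * exp ((u + 8 * u * M ^ 2) / (16 * D ^ 2))))
      (fun s _ => ?_) measurableSet_Ioi
    rw [mul_assoc, ← exp_add]
    ring_nf
  have hlim : Tendsto (fun c => ∫ s in Ioi (0 : ℝ), rescaledIntegrand u M D c s) (𝓝[>] 0)
      (𝓝 (∫ s in Ioi (0 : ℝ), rescaledIntegrand u M D 0 s)) := by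
    refine tendsto_integral_filter_of_dominated_convergence _
      (.of_forall fun c => (measurable_rescaledIntegrand u M D c).aestronglyMeasurable) ?_ hbound
      (.of_forall fun s => (continuousAt_rescaledIntegrand hu hD.ne' M s).continuousWithinAt)
    filter_upwards [hsmall] with c ⟨hc0, hc1, hcM⟩
    refine (ae_restrict_iff' measurableSet_Ioi).2 (.of_forall fun s (hs : 0 < s) => ?_)
    rw [Real.norm_of_nonneg (rescaledIntegrand_nonneg hu hc0.le hs.le M D)]
    exact rescaledIntegrand_le_exp hu hc0.le hc1 hcM hs.le hD.ne'
  have hval :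
      ∫ s in Ioi (0 : ℝ), rescaledIntegrand u M D 0 s = stdNormalCDF (M / D * √u) := by
    simp only [rescaledIntegrand_zero hu.le,
      integral_Ioi_normalPdf_sq _ (by positivity : 0 < D * √u), sub_zero, mul_div_mul_comm,
      div_sqrt]
  rw [← hval]
  exact hlim.congr' (eventually_nhdsWithin_of_forall fun c hc =>
    (IMinf_zero_eq_integral_rescaledIntegrand hu hc M D).symm)

/-- Values of `I_M` at the critical point `c = c* = 1/M` and in the limit `c → 0⁺`. -/
theorem IM_critical_and_zero_limit (u v t M D : ℝ)
    (hu : 0 < u) (hv : 0 ≤ v) (ht : v < t) (hM : 0 < M) (hD : 0 < D) :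
    (IMt u (1 / M) v t M D
        = 2 * (stdNormalCDF (Real.sqrt (u + (1 / M) * v) / ((1 / M) * D))
            - stdNormalCDF (Real.sqrt (u + (1 / M) * v)
                / ((1 / M) * D *
                    Real.sqrt ((1 / M) * (t - v) / (u + (1 / M) * v) + 1)))))
    ∧ (IMinf u (1 / M) v M D
        = 2 * stdNormalCDF (Real.sqrt (u + (1 / M) * v) / ((1 / M) * D)) - 1)
    ∧ Tendsto (fun c => IMt u c 0 t M D) (nhdsWithin 0 (Set.Ioi 0))
        (nhds (stdNormalCDF ((t - M * u) / (D * Real.sqrt u))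
          - stdNormalCDF (-(M / D) * Real.sqrt u)))
    ∧ Tendsto (fun c => IMinf u c 0 M D) (nhdsWithin 0 (Set.Ioi 0))
        (nhds (stdNormalCDF ((M / D) * Real.sqrt u))) := by
  have hcM : 1 / M * M = 1 := one_div_mul_cancel hM.ne'
  have hA : 0 < u + 1 / M * v := by positivity
  have ha : 0 < √(u + 1 / M * v) / (1 / M * D) := by positivity
  have hX : 0 ≤ 1 / M * (t - v) / (u + 1 / M * v) :=
    div_nonneg (mul_nonneg (by positivity) (sub_nonneg.2 ht.le)) hA.le
  refine ⟨?_, ?_, tendsto_IMt_zero hu (hv.trans ht.le) hD M, tendsto_IMinf_zero hu hD M⟩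
  · simp only [IMt, integrand_eq_criticalIntegrand hcM hA.le, integral_criticalIntegrand ha hX,
      div_div, add_comm 1 (1 / M * (t - v) / (u + 1 / M * v))]
  · simp only [IMinf, integrand_eq_criticalIntegrand hcM hA.le, integral_Ioi_criticalIntegrand ha]
end
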